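/- For any graph G of order n ≥ k ≥ 3, the generalized k-connectivities of G and its complement satisfy 1 ≤ κ_k(G) + κ_k(Ḡ) ≤ n − ⌈k/2⌉. -/

import Mathlib

open SimpleGraph

variable {V : Type*}

/-- An `S`-Steiner tree in `G`: a subgraph of `G` that is a tree and contains all of `S`. -/
def IsSteinerTree (G : SimpleGraph V) (S : Set V) (T : G.Subgraph) : Prop :=
  S ⊆ T.verts ∧ T.coe.IsTree

/-- The maximum number of pairwise edge-disjoint `S`-Steiner trees in `G`. -/
noncomputable def steinerEdgeConn (G : SimpleGraph V) (S : Set V) : ℕ :=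
  sSup {n : ℕ | ∃ f : Fin n → G.Subgraph, (∀ i, IsSteinerTree G S (f i)) ∧
    ∀ i j, i ≠ j → Disjoint (f i).edgeSet (f j).edgeSet}

/-- The maximum number of pairwise internally disjoint `S`-Steiner trees in `G`. -/
noncomputable def steinerConn (G : SimpleGraph V) (S : Set V) : ℕ :=
  sSup {n : ℕ | ∃ f : Fin n → G.Subgraph, (∀ i, IsSteinerTree G S (f i)) ∧
    ∀ i j, i ≠ j → Disjoint (f i).edgeSet (f j).edgeSet ∧
      (f i).verts ∩ (f j).verts = S}

/-- The generalized `k`-edge-connectivity `λ_k(G)`. -/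
noncomputable def genEdgeConn (G : SimpleGraph V) (k : ℕ) : ℕ :=
  sInf {m : ℕ | ∃ S : Set V, S.ncard = k ∧ steinerEdgeConn G S = m}

/-- The generalized `k`-connectivity `κ_k(G)`. -/
noncomputable def genConn (G : SimpleGraph V) (k : ℕ) : ℕ :=
  sInf {m : ℕ | ∃ S : Set V, S.ncard = k ∧ steinerConn G S = m}

/-- The edge-connectivity `λ(G)`: the least size of a set of edges whose removal
disconnects the graph. -/
noncomputable def edgeConn (G : SimpleGraph V) : ℕ :=
  sInf {m : ℕ | ∃ M : Set (Sym2 V), M ⊆ G.edgeSet ∧ M.ncard = m ∧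
    ¬ (G.deleteEdges M).Connected}

/-- The vertex-connectivity `κ(G)`: the least size of a set of vertices whose removal
leaves a non-connected graph. -/
noncomputable def vertConn (G : SimpleGraph V) : ℕ :=
  sInf {m : ℕ | ∃ A : Set V, A.ncard = m ∧ ¬ (G.induce (Aᶜ : Set V)).Connected}


/-- The minimum degree `δ(G)` (as the least cardinality of a neighbor set). -/
noncomputable def minDeg (G : SimpleGraph V) : ℕ :=
  sInf {d : ℕ | ∃ v : V, (G.neighborSet v).ncard = d}

/-! Since `G` and `Gᶜ` have disjoint edge sets, edge-disjoint Steiner trees for the same `k`-set `S`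
in `G` and in `Gᶜ` together form an edge-disjoint family in `Kₙ`, so it suffices to bound such
families. A tree with vertex set exactly `S` uses `k - 1` edges inside `S`; any other tree has a
nonempty forest outside `S`, hence at least `k` edges meeting `S`. There are `k.choose 2` edges
inside `S` and `k (n - k)` edges between `S` and its complement, and comparing these budgets
gives at most `n - k + ⌊k/2⌋ = n - ⌈k/2⌉` trees. For the lower bound, `G` or `Gᶜ` is connected,
and a spanning tree is a Steiner tree for every `S`. -/

lemma Finset.sum_ncard_le_ncard_of_pairwise_disjoint {α ι : Type*} (s : Finset ι)
    {A : ι → Set α} {B : Set α} (hB : B.Finite) (hA : Pairwise fun i j ↦ Disjoint (A i) (A j))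
    (hAB : ∀ i, A i ⊆ B) : ∑ i ∈ s, (A i).ncard ≤ B.ncard := by
  rw [← finsum_mem_coe_finset, ← s.finite_toSet.ncard_biUnion
    (fun i _ ↦ hB.subset (hAB i)) (fun i _ j _ hij ↦ hA hij)]
  exact Set.ncard_le_ncard (Set.iUnion₂_subset fun i _ ↦ hAB i) hB

/-- Read `k` as `|S|`, `u` as `|Sᶜ|`, `m` as the number of trees with vertex set exactly `S`,
`r` as the number of the other trees, and `p`, `q` as the numbers of edges inside `S` and between
`S` and `Sᶜ` used by those other trees. -/
lemma add_le_of_edge_budgets {k m r u p q : ℕ} (hk : 2 ≤ k) (hin : (k - 1) * m + p ≤ k.choose 2)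
    (hout : k * r ≤ p + q) (hq : q ≤ k * u) : m + r ≤ u + k / 2 := by
  have hchoose : 2 * k.choose 2 = (k - 1) * k := by
    rw [Nat.choose_two_right, mul_comm (k - 1)]
    exact Nat.mul_div_cancel' (Nat.even_mul_pred_self k).two_dvd
  have hp : (k - 1) * (r - u) ≤ p := calc
    (k - 1) * (r - u) ≤ k * (r - u) := Nat.mul_le_mul_right _ (Nat.sub_le k 1)
    _ = k * r - k * u := Nat.mul_sub k r u
    _ ≤ p := by omega
  have hmul : (k - 1) * (2 * (m + (r - u))) ≤ (k - 1) * k := by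
    rw [← hchoose, mul_left_comm, mul_add]
    omega
  have := Nat.le_of_mul_le_mul_left hmul (by omega)
  omega

namespace SimpleGraph

variable {G : SimpleGraph V}

lemma IsAcyclic.natCard_edgeSet_lt [Finite V] [Nonempty V] (h : G.IsAcyclic) :
    Nat.card G.edgeSet < Nat.card V := by
  obtain ⟨F, hGF, -, hF⟩ := connected_top.exists_isTree_le_of_le_of_isAcyclic le_top h
  have hcard := (isTree_iff_connected_and_card.mp hF).2
  have hle : Nat.card G.edgeSet ≤ Nat.card F.edgeSet :=
    Nat.card_mono (Set.toFinite _) (edgeSet_mono hGF)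
  omega

lemma Connected.exists_isSteinerTree (hG : G.Connected) (S : Set V) :
    ∃ T, IsSteinerTree G S T := by
  obtain ⟨F, hle, hF⟩ := hG.exists_isTree_le
  refine ⟨toSubgraph F hle, fun v _ ↦ Set.mem_univ v, ?_⟩
  exact (Subgraph.spanningCoeEquivCoeOfSpanning _ (toSubgraph.isSpanning F hle)).isTree_iff.mp hF

namespace Subgraph

lemma ncard_edgeSet_eq_natCard_coe (T : G.Subgraph) :
    T.edgeSet.ncard = Nat.card T.coe.edgeSet := by
  rw [← T.image_coe_edgeSet_coe, Set.ncard_image_of_injective _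
    (Sym2.map.injective Subtype.val_injective), Nat.card_coe_set_eq]

lemma edgeSet_subset_sym2_verts (T : G.Subgraph) : T.edgeSet ⊆ T.verts.sym2 := by
  rintro ⟨x, y⟩ h
  exact ⟨T.edge_vert h, T.edge_vert h.symm⟩

lemma edgeSet_induce_verts_sdiff (T : G.Subgraph) (S : Set V) :
    (T.induce (T.verts \ S)).edgeSet = T.edgeSet ∩ Sᶜ.sym2 := by
  ext ⟨x, y⟩
  constructor
  · rintro ⟨⟨-, hx⟩, ⟨-, hy⟩, h⟩
    exact ⟨h, hx, hy⟩
  · rintro ⟨h, hx, hy⟩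
    exact ⟨⟨T.edge_vert h, hx⟩, ⟨T.edge_vert h.symm, hy⟩, h⟩

lemma isAcyclic_coe_of_le {T' T : G.Subgraph} (h : T' ≤ T) (hT : T.coe.IsAcyclic) :
    T'.coe.IsAcyclic :=
  hT.comap _ (inclusion.injective h)

variable [Finite V] {T : G.Subgraph}

lemma ncard_edgeSet_add_one_of_isTree (hT : T.coe.IsTree) :
    T.edgeSet.ncard + 1 = T.verts.ncard := by
  rw [ncard_edgeSet_eq_natCard_coe, ← Nat.card_coe_set_eq]
  exact (isTree_iff_connected_and_card.mp hT).2

lemma ncard_edgeSet_lt_of_isAcyclic (hT : T.coe.IsAcyclic) (hne : T.verts.Nonempty) :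
    T.edgeSet.ncard < T.verts.ncard := by
  have := hne.to_subtype
  rw [ncard_edgeSet_eq_natCard_coe, ← Nat.card_coe_set_eq]
  exact hT.natCard_edgeSet_lt

lemma ncard_verts_inter_le_ncard_edgeSet_sdiff (hT : T.coe.IsTree) {S : Set V}
    (hS : ¬ T.verts ⊆ S) : (T.verts ∩ S).ncard ≤ (T.edgeSet \ Sᶜ.sym2).ncard := by
  have hforest : (T.edgeSet ∩ Sᶜ.sym2).ncard < (T.verts \ S).ncard := by
    rw [← edgeSet_induce_verts_sdiff]
    refine ncard_edgeSet_lt_of_isAcyclic (isAcyclic_coe_of_le ?_ hT.isAcyclic)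
      (Set.sdiff_nonempty.mpr hS)
    exact (induce_mono_right Set.sdiff_subset).trans_eq induce_self_verts
  have hedges := Set.ncard_inter_add_ncard_sdiff_eq_ncard T.edgeSet Sᶜ.sym2
  have hverts := Set.ncard_inter_add_ncard_sdiff_eq_ncard T.verts S
  have htree := ncard_edgeSet_add_one_of_isTree hT
  omega

end Subgraph

end SimpleGraph

section SteinerTree

variable [Finite V] {G : SimpleGraph V} {S : Set V} {T : G.Subgraph}

lemma IsSteinerTree.ncard_edgeSet_inter_sym2_add_one (hT : IsSteinerTree G S T)
    (hV : T.verts = S) : (T.edgeSet ∩ S.sym2).ncard + 1 = S.ncard := by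
  rw [Set.inter_eq_left.mpr (hV ▸ T.edgeSet_subset_sym2_verts), ← hV]
  exact Subgraph.ncard_edgeSet_add_one_of_isTree hT.2

lemma IsSteinerTree.ncard_le_ncard_edgeSet_inter_sym2_add (hT : IsSteinerTree G S T)
    (hV : T.verts ≠ S) :
    S.ncard ≤ (T.edgeSet ∩ S.sym2).ncard + ((T.edgeSet \ Sᶜ.sym2) \ S.sym2).ncard := by
  have hmeet := Subgraph.ncard_verts_inter_le_ncard_edgeSet_sdiff hT.2
    fun h ↦ hV (h.antisymm hT.1)
  rw [Set.inter_eq_right.mpr hT.1, ← Set.ncard_inter_add_ncard_sdiff_eq_ncard _ S.sym2] at hmeet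
  have hinner : (T.edgeSet \ Sᶜ.sym2 ∩ S.sym2).ncard ≤ (T.edgeSet ∩ S.sym2).ncard :=
    Set.ncard_le_ncard fun e he ↦ ⟨he.1.1, he.2⟩
  omega

end SteinerTree

section EdgeBudget

open Finset

variable [Fintype V] {ι : Type*} [Fintype ι] {E : ι → Set (Sym2 V)}

lemma sum_ncard_inter_sym2_le_choose_two (hE : ∀ i, ∀ e ∈ E i, ¬ e.IsDiag)
    (hdisj : Pairwise fun i j ↦ Disjoint (E i) (E j)) (S : Finset V) :
    ∑ i, (E i ∩ (S : Set V).sym2).ncard ≤ S.card.choose 2 := by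
  classical
  rw [← Sym2.card_image_offDiag, ← Set.ncard_coe_finset]
  refine sum_ncard_le_ncard_of_pairwise_disjoint _ (Set.toFinite _)
    (fun i j hij ↦ (hdisj hij).mono Set.inter_subset_left Set.inter_subset_left) ?_
  rintro i ⟨x, y⟩ ⟨h, hx, hy⟩
  have hxy : x ≠ y := fun hxy ↦ hE i _ h (Sym2.mk_isDiag_iff.mpr hxy)
  exact mem_image.mpr ⟨(x, y), mem_offDiag.mpr ⟨hx, hy, hxy⟩, rfl⟩

lemma sum_ncard_sdiff_sym2_le (hdisj : Pairwise fun i j ↦ Disjoint (E i) (E j))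
    (S : Finset V) :
    ∑ i, ((E i \ (S : Set V)ᶜ.sym2) \ (S : Set V).sym2).ncard ≤
      S.card * (Fintype.card V - S.card) := by
  classical
  rw [← card_compl, ← card_product]
  refine le_trans ?_ (card_image_le (f := Sym2.mk.uncurry))
  rw [← Set.ncard_coe_finset]
  refine sum_ncard_le_ncard_of_pairwise_disjoint _ (Set.toFinite _)
    (fun i j hij ↦ (hdisj hij).mono (fun e he ↦ he.1.1) (fun e he ↦ he.1.1)) ?_
  rintro i ⟨x, y⟩ ⟨⟨-, hout⟩, hin⟩
  simp only [Set.mk_mem_sym2_iff, Set.mem_compl_iff, mem_coe, not_and_or, not_not] at hout hin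
  by_cases hx : x ∈ S
  · have hy : y ∉ S := hin.resolve_left (not_not.mpr hx)
    exact mem_image.mpr ⟨(x, y), mem_product.mpr ⟨hx, mem_compl.mpr hy⟩, rfl⟩
  · have hy : y ∈ S := hout.resolve_left hx
    exact mem_image.mpr ⟨(y, x), mem_product.mpr ⟨hy, mem_compl.mpr hx⟩, Sym2.eq_swap⟩

end EdgeBudget

open Finset in
theorem card_le_of_pairwise_disjoint_steinerTrees {ι : Type*} [Fintype ι] [Fintype V]
    {H : ι → SimpleGraph V} {S : Finset V} (hS : 2 ≤ S.card) {T : ∀ i, (H i).Subgraph}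
    (hT : ∀ i, IsSteinerTree (H i) S (T i))
    (hdisj : Pairwise fun i j ↦ Disjoint (T i).edgeSet (T j).edgeSet) :
    Fintype.card ι ≤ Fintype.card V - S.card + S.card / 2 := by
  classical
  set inner := fun i ↦ (T i).edgeSet ∩ (S : Set V).sym2
  set cross := fun i ↦ ((T i).edgeSet \ (S : Set V)ᶜ.sym2) \ (S : Set V).sym2
  set I := univ.filter fun i ↦ (T i).verts = S
  set O := univ.filter fun i ↦ ¬(T i).verts = S
  have hI : ∀ i ∈ I, S.card - 1 ≤ (inner i).ncard := fun i hi ↦ by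
    have := (hT i).ncard_edgeSet_inter_sym2_add_one (mem_filter.mp hi).2
    rw [Set.ncard_coe_finset] at this
    exact (Nat.sub_eq_of_eq_add this.symm).le
  have hO : ∀ i ∈ O, S.card ≤ (inner i).ncard + (cross i).ncard := fun i hi ↦ by
    simpa using (hT i).ncard_le_ncard_edgeSet_inter_sym2_add (mem_filter.mp hi).2
  have hinner : ∑ i, (inner i).ncard ≤ S.card.choose 2 := sum_ncard_inter_sym2_le_choose_two
    (fun i e he ↦ (H i).not_isDiag_of_mem_edgeSet ((T i).edgeSet_subset he)) hdisj S
  have hcross : ∑ i, (cross i).ncard ≤ S.card * (Fintype.card V - S.card) :=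
    sum_ncard_sdiff_sym2_le hdisj S
  have hsplit : ∑ i ∈ I, (inner i).ncard + ∑ i ∈ O, (inner i).ncard = ∑ i, (inner i).ncard :=
    sum_filter_add_sum_filter_not _ _ _
  have hIsum : (S.card - 1) * #I ≤ ∑ i ∈ I, (inner i).ncard := by
    simpa [mul_comm] using card_nsmul_le_sum I _ _ hI
  have hOsum : S.card * #O ≤ ∑ i ∈ O, (inner i).ncard + ∑ i ∈ O, (cross i).ncard := by
    rw [← sum_add_distrib]
    simpa [mul_comm] using card_nsmul_le_sum O _ _ hO
  have hOcross : ∑ i ∈ O, (cross i).ncard ≤ ∑ i, (cross i).ncard :=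
    sum_le_sum_of_subset (subset_univ O)
  have hcard : #I + #O = Fintype.card ι := card_filter_add_card_filter_not _
  rw [← hcard]
  exact add_le_of_edge_budgets hS (by omega) hOsum (hOcross.trans hcross)

section SteinerConn

variable [Fintype V] {G : SimpleGraph V}

lemma bddAbove_steinerConn {S : Set V} (hS : 2 ≤ S.ncard) :
    BddAbove {n : ℕ | ∃ f : Fin n → G.Subgraph, (∀ i, IsSteinerTree G S (f i)) ∧
      ∀ i j, i ≠ j → Disjoint (f i).edgeSet (f j).edgeSet ∧ (f i).verts ∩ (f j).verts = S} := by
  obtain ⟨S, rfl⟩ := S.toFinite.exists_finset_coe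
  rw [Set.ncard_coe_finset] at hS
  refine ⟨Fintype.card V - S.card + S.card / 2, fun m ⟨f, hf, hd⟩ ↦ ?_⟩
  simpa using card_le_of_pairwise_disjoint_steinerTrees hS hf fun i j hij ↦ (hd i j hij).1

lemma exists_steinerTrees_card_eq_steinerConn {S : Set V} (hS : 2 ≤ S.ncard) :
    ∃ f : Fin (steinerConn G S) → G.Subgraph, (∀ i, IsSteinerTree G S (f i)) ∧
      Pairwise fun i j ↦ Disjoint (f i).edgeSet (f j).edgeSet := by
  have hempty : 0 ∈ {n : ℕ | ∃ f : Fin n → G.Subgraph, (∀ i, IsSteinerTree G S (f i)) ∧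
      ∀ i j, i ≠ j → Disjoint (f i).edgeSet (f j).edgeSet ∧ (f i).verts ∩ (f j).verts = S} :=
    ⟨Fin.elim0, fun i ↦ i.elim0, fun i ↦ i.elim0⟩
  obtain ⟨f, hf, hd⟩ := Nat.sSup_mem ⟨0, hempty⟩ (bddAbove_steinerConn hS)
  exact ⟨f, hf, fun i j hij ↦ (hd i j hij).1⟩

lemma one_le_steinerConn (hG : G.Connected) {S : Set V} (hS : 2 ≤ S.ncard) :
    1 ≤ steinerConn G S := by
  obtain ⟨T, hT⟩ := hG.exists_isSteinerTree S
  exact le_csSup (bddAbove_steinerConn hS)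
    ⟨fun _ ↦ T, fun _ ↦ hT, fun i j hij ↦ absurd (Subsingleton.elim i j) hij⟩

lemma steinerConn_add_steinerConn_compl_le {S : Finset V} (hS : 2 ≤ S.card) :
    steinerConn G S + steinerConn Gᶜ S ≤ Fintype.card V - S.card + S.card / 2 := by
  have hS' : 2 ≤ (S : Set V).ncard := by rwa [Set.ncard_coe_finset]
  obtain ⟨f, hf, hfd⟩ := exists_steinerTrees_card_eq_steinerConn (G := G) hS'
  obtain ⟨g, hg, hgd⟩ := exists_steinerTrees_card_eq_steinerConn (G := Gᶜ) hS'
  have hcompl : Disjoint G.edgeSet Gᶜ.edgeSet := disjoint_edgeSet.mpr disjoint_compl_right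
  have := card_le_of_pairwise_disjoint_steinerTrees (H := Sum.elim (fun _ ↦ G) fun _ ↦ Gᶜ)
    (T := Sum.rec f g) hS (Sum.rec hf hg) <| by
    rintro (i | i) (j | j) hij
    · exact hfd (ne_of_apply_ne Sum.inl hij)
    · exact hcompl.mono (f i).edgeSet_subset (g j).edgeSet_subset
    · exact hcompl.symm.mono (g i).edgeSet_subset (f j).edgeSet_subset
    · exact hgd (ne_of_apply_ne Sum.inr hij)
  simpa using this

end SteinerConn

section GenConn

variable [Fintype V] {G : SimpleGraph V} {k : ℕ}

lemma exists_steinerConn_eq_genConn (hk : k ≤ Fintype.card V) :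
    ∃ S : Set V, S.ncard = k ∧ steinerConn G S = genConn G k := by
  obtain ⟨S, -, hS⟩ := (Finset.univ : Finset V).exists_subset_card_eq (by simpa using hk)
  exact Nat.sInf_mem (s := {m | ∃ S : Set V, S.ncard = k ∧ steinerConn G S = m})
    ⟨_, S, by simpa using hS, rfl⟩

lemma one_le_genConn (hG : G.Connected) (h2 : 2 ≤ k) (hk : k ≤ Fintype.card V) :
    1 ≤ genConn G k := by
  obtain ⟨S, hS, heq⟩ := exists_steinerConn_eq_genConn (G := G) hk
  exact heq ▸ one_le_steinerConn hG (hS ▸ h2)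

lemma genConn_add_genConn_compl_le (h2 : 2 ≤ k) (hk : k ≤ Fintype.card V) :
    genConn G k + genConn Gᶜ k ≤ Fintype.card V - k + k / 2 := by
  obtain ⟨S, -, hS⟩ := (Finset.univ : Finset V).exists_subset_card_eq (by simpa using hk)
  have hG : genConn G k ≤ steinerConn G S := Nat.sInf_le ⟨S, by simpa using hS, rfl⟩
  have hGc : genConn Gᶜ k ≤ steinerConn Gᶜ S := Nat.sInf_le ⟨S, by simpa using hS, rfl⟩
  have := steinerConn_add_steinerConn_compl_le (G := G) (hS ▸ h2)
  omega

end GenConn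

theorem nordhausGaddum_sum {V : Type*} [Fintype V] (G : SimpleGraph V) (n k : ℕ)
    (hn : Fintype.card V = n) (h3 : 3 ≤ k) (hkn : k ≤ n) :
    1 ≤ genConn G k + genConn Gᶜ k ∧ genConn G k + genConn Gᶜ k ≤ n - (k + 1) / 2 := by
  subst hn
  have : Nonempty V := Fintype.card_pos_iff.mp (by omega)
  refine ⟨?_, ?_⟩
  · rcases G.connected_or_connected_compl with hG | hG
    · have := one_le_genConn hG (by omega) hkn
      omega
    · have := one_le_genConn hG (by omega) hkn
      omega
  · have := genConn_add_genConn_compl_le (G := G) (by omega) hkn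
    omega
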